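/- Let f, g : ℝ^p × ℝ^d → ℝ be differentiable, λ > 0, and suppose Φ := f + λ·g has L_Φ-Lipschitz gradient (L_Φ > 0). Fix 0 < α ≤ 1/L_Φ and constants L ≥ 0, L_g > 0. Let θ = (W, x), let θ⁺ := θ − α·∇Φ(θ), and suppose x* ∈ ℝ^d satisfies ∇_x g(W, x*) = 0. Suppose further that z ∈ ℝ^d and t ≥ 1 satisfy the correction-error bound 4·λ²·‖∇_W g(W, x*) − ∇_W g(W, z)‖² ≤ (1/(2α²))·‖θ⁺ − θ‖² + 2·L²·L_g²/(α²·t²). Then ‖∇f(θ) + λ·(∇g(θ) − ∇g(W, x*))‖² ≤ (5/α)·(Φ(θ) − Φ(θ⁺)) + 2·L²·L_g²/(α²·t²) + 4·λ²·‖∇_W g(W, z)‖². -/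

import Mathlib

/-- The point `(W, x)` of the product Hilbert space `ℝ^p × ℝ^d` (with the ℓ² product
norm `‖(u,v)‖² = ‖u‖² + ‖v‖²`). -/
noncomputable def pairL2 {E F : Type*} [NormedAddCommGroup E] [NormedAddCommGroup F]
    (a : E) (b : F) : WithLp 2 (E × F) := (WithLp.equiv 2 (E × F)).symm (a, b)

/-!
The penalized gradient is `∇Φ(θ) - λ ∇g(W, x*)`, and `∇g(W, x*) = (∇_W g(W, x*), 0)` because `x*`
is stationary. Two uses of `‖a + b‖² ≤ 2‖a‖² + 2‖b‖²`, first on this difference and then on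
`∇_W g(W, x*) = (∇_W g(W, x*) - ∇_W g(W, z)) + ∇_W g(W, z)`, together with the correction-error
bound and `‖θ⁺ - θ‖ = α ‖∇Φ(θ)‖`, bound its square by `5/2 ‖∇Φ(θ)‖²` plus the two error terms.
The descent lemma for the `L_Φ`-smooth `Φ` with step `α ≤ 1/L_Φ` gives
`α/2 ‖∇Φ(θ)‖² ≤ Φ(θ) - Φ(θ⁺)`.
-/

open Set
open scoped InnerProductSpace

theorem norm_add_sq_le_two_mul {E : Type*} [SeminormedAddGroup E] (a b : E) :
    ‖a + b‖ ^ 2 ≤ 2 * ‖a‖ ^ 2 + 2 * ‖b‖ ^ 2 := by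
  nlinarith [norm_add_le a b, norm_nonneg (a + b), sq_nonneg (‖a‖ - ‖b‖)]

theorem norm_sub_sq_le_two_mul {E : Type*} [SeminormedAddGroup E] (a b : E) :
    ‖a - b‖ ^ 2 ≤ 2 * ‖a‖ ^ 2 + 2 * ‖b‖ ^ 2 := by
  simpa [sub_eq_add_neg] using norm_add_sq_le_two_mul a (-b)

section Descent

variable {E : Type*} [NormedAddCommGroup E] [InnerProductSpace ℝ E] [CompleteSpace E]
  {F : E → ℝ} {L : ℝ}

theorem apply_le_add_inner_gradient_add_sq (hF : Differentiable ℝ F)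
    (hLip : ∀ a b, ‖gradient F a - gradient F b‖ ≤ L * ‖a - b‖) (x y : E) :
    F y ≤ F x + ⟪gradient F x, y - x⟫_ℝ + L / 2 * ‖y - x‖ ^ 2 := by
  set v := y - x
  -- `F` minus its quadratic model along the segment is antitone by the Lipschitz bound
  set h : ℝ → ℝ := fun s => F (x + s • v) - s * ⟪gradient F x, v⟫_ℝ - L / 2 * s ^ 2 * ‖v‖ ^ 2
  have hderiv (s : ℝ) :
      HasDerivAt h (⟪gradient F (x + s • v) - gradient F x, v⟫_ℝ - L * s * ‖v‖ ^ 2) s := by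
    have hline : HasDerivAt (fun s : ℝ => x + s • v) v s := by
      simpa using ((hasDerivAt_id s).smul_const v).const_add x
    have hFline := (hF (x + s • v)).hasFDerivAt.comp_hasDerivAt s hline
    rw [← inner_gradient_left] at hFline
    refine ((hFline.sub ((hasDerivAt_id s).mul_const ⟪gradient F x, v⟫_ℝ)).sub
      (((hasDerivAt_pow 2 s).const_mul (L / 2)).mul_const (‖v‖ ^ 2))).congr_deriv ?_
    rw [inner_sub_left]
    ring
  have hslope (s : ℝ) (hs : 0 < s) :
      ⟪gradient F (x + s • v) - gradient F x, v⟫_ℝ - L * s * ‖v‖ ^ 2 ≤ 0 := by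
    have hgrad : ‖gradient F (x + s • v) - gradient F x‖ ≤ L * (s * ‖v‖) := by
      simpa [norm_smul, abs_of_pos hs] using hLip (x + s • v) x
    nlinarith [real_inner_le_norm (gradient F (x + s • v) - gradient F x) v, norm_nonneg v]
  have hanti : AntitoneOn h (Ici 0) :=
    antitoneOn_of_hasDerivWithinAt_nonpos (convex_Ici 0)
      (HasDerivAt.continuousOn fun s _ => hderiv s)
      (fun s _ => (hderiv s).hasDerivWithinAt)
      (fun s hs => hslope s (by simpa using hs))
  have h01 : h 1 ≤ h 0 := hanti self_mem_Ici (mem_Ici.2 zero_le_one) zero_le_one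
  simp only [h, v, one_smul, add_sub_cancel, one_mul, one_pow, zero_smul, add_zero, zero_mul,
    sub_zero, ne_eq, OfNat.ofNat_ne_zero, not_false_eq_true, zero_pow, mul_zero] at h01
  linarith

theorem apply_sub_smul_gradient_le (hF : Differentiable ℝ F)
    (hLip : ∀ a b, ‖gradient F a - gradient F b‖ ≤ L * ‖a - b‖) {α : ℝ} (hα : 0 ≤ α)
    (hαL : α * L ≤ 1) (x : E) :
    F (x - α • gradient F x) ≤ F x - α / 2 * ‖gradient F x‖ ^ 2 := by
  have hdesc := apply_le_add_inner_gradient_add_sq hF hLip x (x - α • gradient F x)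
  rw [sub_sub_cancel_left, inner_neg_right, real_inner_smul_right, real_inner_self_eq_norm_sq,
    norm_neg, norm_smul, Real.norm_of_nonneg hα] at hdesc
  nlinarith [mul_nonneg (mul_nonneg hα (sq_nonneg ‖gradient F x‖)) (sub_nonneg.2 hαL)]

end Descent

theorem gradient_add_const_mul {E : Type*} [NormedAddCommGroup E] [InnerProductSpace ℝ E]
    [CompleteSpace E] {f g : E → ℝ} {x : E} (hf : DifferentiableAt ℝ f x)
    (hg : DifferentiableAt ℝ g x) (c : ℝ) :
    gradient (fun y => f y + c * g y) x = gradient f x + c • gradient g x := by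
  refine (hasGradientAt_iff_hasFDerivAt.2
    ((hf.hasFDerivAt.add (hg.hasFDerivAt.const_mul c)).congr_fderiv ?_)).gradient
  ext u
  simp

section PartialGradient

variable {E F : Type*} [NormedAddCommGroup E] [InnerProductSpace ℝ E] [CompleteSpace E]
  [NormedAddCommGroup F] [InnerProductSpace ℝ F] [CompleteSpace F]
  {g : WithLp 2 (E × F) → ℝ} {a : E} {b : F}

theorem gradient_comp_pairL2_left (hg : DifferentiableAt ℝ g (pairL2 a b)) :
    gradient (fun a' => g (pairL2 a' b)) a = (gradient g (pairL2 a b)).fst := by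
  have hpair : HasFDerivAt (fun a' => pairL2 a' b)
      ((WithLp.prodContinuousLinearEquiv 2 ℝ E F).symm.toContinuousLinearMap.comp
        (ContinuousLinearMap.inl ℝ E F)) a :=
    (WithLp.prodContinuousLinearEquiv 2 ℝ E F).symm.hasFDerivAt.comp a
      (hasFDerivAt_prodMk_left a b)
  refine (hasGradientAt_iff_hasFDerivAt.2
    ((hg.hasFDerivAt.comp a hpair).congr_fderiv ?_)).gradient
  ext u
  simp [← inner_gradient_left, WithLp.prod_inner_apply]

theorem gradient_comp_pairL2_right (hg : DifferentiableAt ℝ g (pairL2 a b)) :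
    gradient (fun b' => g (pairL2 a b')) b = (gradient g (pairL2 a b)).snd := by
  have hpair : HasFDerivAt (fun b' => pairL2 a b')
      ((WithLp.prodContinuousLinearEquiv 2 ℝ E F).symm.toContinuousLinearMap.comp
        (ContinuousLinearMap.inr ℝ E F)) b :=
    (WithLp.prodContinuousLinearEquiv 2 ℝ E F).symm.hasFDerivAt.comp b
      (hasFDerivAt_prodMk_right a b)
  refine (hasGradientAt_iff_hasFDerivAt.2
    ((hg.hasFDerivAt.comp b hpair).congr_fderiv ?_)).gradient
  ext u
  simp [← inner_gradient_left, WithLp.prod_inner_apply]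

end PartialGradient

theorem per_step_penalized_grad_bound_general (p d : ℕ)
    (f g : WithLp 2 (EuclideanSpace ℝ (Fin p) × EuclideanSpace ℝ (Fin d)) → ℝ)
    (hf : Differentiable ℝ f) (hg : Differentiable ℝ g)
    (lam : ℝ)
    (Φ : WithLp 2 (EuclideanSpace ℝ (Fin p) × EuclideanSpace ℝ (Fin d)) → ℝ)
    (hΦdef : ∀ θ, Φ θ = f θ + lam * g θ)
    (LΦ : ℝ)
    (hLip : ∀ θ θ', ‖gradient Φ θ - gradient Φ θ'‖ ≤ LΦ * ‖θ - θ'‖)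
    (α : ℝ) (hα0 : 0 < α) (hα1 : α ≤ 1 / LΦ)
    (L : ℝ) (Lg : ℝ)
    (W : EuclideanSpace ℝ (Fin p))
    (θ θplus : WithLp 2 (EuclideanSpace ℝ (Fin p) × EuclideanSpace ℝ (Fin d)))
    (hθplus : θplus = θ - α • gradient Φ θ)
    (xstar : EuclideanSpace ℝ (Fin d))
    (hstat : gradient (fun y => g (pairL2 W y)) xstar = 0)
    (z : EuclideanSpace ℝ (Fin d)) (t : ℕ)
    (hcorr : 4 * lam ^ 2 * ‖gradient (fun W' => g (pairL2 W' xstar)) W -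
          gradient (fun W' => g (pairL2 W' z)) W‖ ^ 2 ≤
        (1 / (2 * α ^ 2)) * ‖θplus - θ‖ ^ 2 + 2 * L ^ 2 * Lg ^ 2 / (α ^ 2 * (t : ℝ) ^ 2)) :
    ‖gradient f θ + lam • (gradient g θ - gradient g (pairL2 W xstar))‖ ^ 2 ≤
      (5 / α) * (Φ θ - Φ θplus) + 2 * L ^ 2 * Lg ^ 2 / (α ^ 2 * (t : ℝ) ^ 2)
        + 4 * lam ^ 2 * ‖gradient (fun W' => g (pairL2 W' z)) W‖ ^ 2 := by
  have hΦ : Φ = fun θ => f θ + lam * g θ := funext hΦdef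
  rw [gradient_comp_pairL2_left (hg _)] at hcorr
  set G := gradient Φ θ
  set Gstar := gradient g (pairL2 W xstar)
  set gz := gradient (fun W' => g (pairL2 W' z)) W
  have hdescent : 5 / 2 * ‖G‖ ^ 2 ≤ 5 / α * (Φ θ - Φ θplus) := by
    have hαLΦ : α * LΦ ≤ 1 := (le_div_iff₀ (one_div_pos.1 (hα0.trans_le hα1))).1 hα1
    have := apply_sub_smul_gradient_le (hΦ ▸ hf.add (hg.const_mul lam)) hLip hα0.le hαLΦ θ
    rw [← hθplus] at this
    calc 5 / 2 * ‖G‖ ^ 2 = 5 / α * (α / 2 * ‖G‖ ^ 2) := by field_simp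
      _ ≤ 5 / α * (Φ θ - Φ θplus) := by gcongr; linarith
  have hstep : 1 / (2 * α ^ 2) * ‖θplus - θ‖ ^ 2 = ‖G‖ ^ 2 / 2 := by
    rw [hθplus, sub_sub_cancel_left, norm_neg, norm_smul, Real.norm_of_nonneg hα0.le]
    field_simp
  have hpenalty : ‖gradient f θ + lam • (gradient g θ - Gstar)‖ ^ 2 ≤
      2 * ‖G‖ ^ 2 + 2 * lam ^ 2 * ‖Gstar.fst‖ ^ 2 := by
    have hG : G = gradient f θ + lam • gradient g θ :=
      (congrArg (gradient · θ) hΦ).trans (gradient_add_const_mul (hf θ) (hg θ) lam)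
    have hsnd : Gstar.snd = 0 := (gradient_comp_pairL2_right (hg _)).symm.trans hstat
    have hGstar : ‖lam • Gstar‖ ^ 2 = lam ^ 2 * ‖Gstar.fst‖ ^ 2 := by
      rw [norm_smul, mul_pow, Real.norm_eq_abs, sq_abs, WithLp.prod_norm_sq_eq_of_L2, hsnd,
        norm_zero, zero_pow two_ne_zero, add_zero]
    calc ‖gradient f θ + lam • (gradient g θ - Gstar)‖ ^ 2 = ‖G - lam • Gstar‖ ^ 2 := by
          rw [hG, smul_sub, add_sub_assoc]
      _ ≤ 2 * ‖G‖ ^ 2 + 2 * lam ^ 2 * ‖Gstar.fst‖ ^ 2 := by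
          rw [mul_assoc 2, ← hGstar]
          exact norm_sub_sq_le_two_mul G (lam • Gstar)
  have hsplit : ‖Gstar.fst‖ ^ 2 ≤ 2 * ‖Gstar.fst - gz‖ ^ 2 + 2 * ‖gz‖ ^ 2 := by
    simpa using norm_add_sq_le_two_mul (Gstar.fst - gz) gz
  rw [hstep] at hcorr
  nlinarith [mul_le_mul_of_nonneg_left hsplit (sq_nonneg lam)]

/-- Per-step bound for the penalized bilevel gradient: if `Φ = f + λg` has
`L_Φ`-Lipschitz gradient, `0 < α ≤ 1/L_Φ`, `θ⁺ = θ − α∇Φ(θ)`, `∇_x g(W,x*) = 0`, and the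
correction error satisfies
`4λ²‖∇_W g(W,x*) − ∇_W g(W,z)‖² ≤ ‖θ⁺ − θ‖²/(2α²) + 2L²L_g²/(α²t²)`, then
`‖∇f(θ) + λ(∇g(θ) − ∇g(W,x*))‖² ≤ (5/α)(Φ(θ) − Φ(θ⁺)) + 2L²L_g²/(α²t²) + 4λ²‖∇_W g(W,z)‖²`. -/
theorem per_step_penalized_grad_bound (p d : ℕ)
    (f g : WithLp 2 (EuclideanSpace ℝ (Fin p) × EuclideanSpace ℝ (Fin d)) → ℝ)
    (hf : Differentiable ℝ f) (hg : Differentiable ℝ g)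
    (lam : ℝ) (hlam : 0 < lam)
    (Φ : WithLp 2 (EuclideanSpace ℝ (Fin p) × EuclideanSpace ℝ (Fin d)) → ℝ)
    (hΦdef : ∀ θ, Φ θ = f θ + lam * g θ)
    (LΦ : ℝ) (hLΦ : 0 < LΦ)
    (hLip : ∀ θ θ', ‖gradient Φ θ - gradient Φ θ'‖ ≤ LΦ * ‖θ - θ'‖)
    (α : ℝ) (hα0 : 0 < α) (hα1 : α ≤ 1 / LΦ)
    (L : ℝ) (hL : 0 ≤ L) (Lg : ℝ) (hLg : 0 < Lg)
    (W : EuclideanSpace ℝ (Fin p)) (x : EuclideanSpace ℝ (Fin d))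
    (θ θplus : WithLp 2 (EuclideanSpace ℝ (Fin p) × EuclideanSpace ℝ (Fin d)))
    (hθ : θ = pairL2 W x)
    (hθplus : θplus = θ - α • gradient Φ θ)
    (xstar : EuclideanSpace ℝ (Fin d))
    (hstat : gradient (fun y => g (pairL2 W y)) xstar = 0)
    (z : EuclideanSpace ℝ (Fin d)) (t : ℕ) (ht : 1 ≤ t)
    (hcorr : 4 * lam ^ 2 * ‖gradient (fun W' => g (pairL2 W' xstar)) W -
          gradient (fun W' => g (pairL2 W' z)) W‖ ^ 2 ≤
        (1 / (2 * α ^ 2)) * ‖θplus - θ‖ ^ 2 + 2 * L ^ 2 * Lg ^ 2 / (α ^ 2 * (t : ℝ) ^ 2)) :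
    ‖gradient f θ + lam • (gradient g θ - gradient g (pairL2 W xstar))‖ ^ 2 ≤
      (5 / α) * (Φ θ - Φ θplus) + 2 * L ^ 2 * Lg ^ 2 / (α ^ 2 * (t : ℝ) ^ 2)
        + 4 * lam ^ 2 * ‖gradient (fun W' => g (pairL2 W' z)) W‖ ^ 2 :=
  per_step_penalized_grad_bound_general p d f g hf hg lam Φ hΦdef LΦ hLip α hα0 hα1 L Lg W θ θplus
    hθplus xstar hstat z t hcorr
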